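/- Let A be an n×n real matrix with nonnegative entries, and let J, B, D be n×n real diagonal matrices with J_{ii} ∈ {0,1}, B_{ii} = β_i > 0, and D_{ii} = δ_i > 0 for each i. Let x : [0, ∞) → ℝⁿ be a differentiable function with x(t) ≥ 0 entrywise for all t ≥ 0 and satisfying the entrywise differential inequality (d/dt) x(t) ≤ (J B A − D) x(t) for all t ≥ 0. Let λ̄ > 0 and σ ≥ 0 be real numbers. If there exists a vector v ∈ ℝⁿ with all entries strictly positive such that every entry of vᵀ J B A + 𝟙ₙᵀ D is strictly less than the corresponding entry of vᵀ D, and vᵀ x(0) < λ̄ + σ, then the matrix J B A − D is Hurwitz stable and ∫₀^∞ 𝟙ₙᵀ D x(t) dt − σ ≤ λ̄. -/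

import Mathlib

/-!
`M = J B A - D` is a Metzler matrix and the positive vector `v` is a linear Lyapunov function for
it: `vᵀ M ≤ -𝟙ᵀ D < 0` entrywise. For a complex eigenpair `(z, w)` of `M` the moduli `|w|` satisfy
`Re z · |w| ≤ M |w|`, and pairing with `v` forces `Re z < 0`. Along the trajectory, `y = vᵀ x` is
nonnegative with `y' ≤ vᵀ M x ≤ -𝟙ᵀ D x`, so `∫₀^T 𝟙ᵀ D x ≤ y(0) - y(T) ≤ vᵀ x(0) < λ̄ + σ` for
every `T`, which gives both integrability and the bound.
-/

open Matrix MeasureTheory Set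

theorem dotProduct_pos_of_pos_of_nonneg {ι : Type*} [Fintype ι] {v w : ι → ℝ}
    (hv : ∀ i, 0 < v i) (hw : 0 ≤ w) (hw0 : w ≠ 0) : 0 < v ⬝ᵥ w := by
  obtain ⟨i, hi⟩ := Function.ne_iff.mp hw0
  exact Finset.sum_pos' (fun j _ => mul_nonneg (hv j).le (hw j))
    ⟨i, Finset.mem_univ i, mul_pos (hv i) ((hw i).lt_of_ne' hi)⟩

namespace Matrix

variable {ι : Type*}

def IsMetzler (M : Matrix ι ι ℝ) : Prop := ∀ i j, i ≠ j → 0 ≤ M i j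

theorem IsMetzler.of_nonneg {M : Matrix ι ι ℝ} (hM : ∀ i j, 0 ≤ M i j) : M.IsMetzler :=
  fun i j _ => hM i j

theorem IsMetzler.sub_diagonal [DecidableEq ι] {M : Matrix ι ι ℝ} (hM : M.IsMetzler)
    (d : ι → ℝ) : (M - diagonal d).IsMetzler := fun i j hij => by
  simpa [diagonal_apply_ne _ hij] using hM i j hij

theorem exists_mulVec_eq_smul_of_mem_spectrum [Fintype ι] {K : Type*} [Field K] [DecidableEq ι]
    {N : Matrix ι ι K} {z : K} (hz : z ∈ spectrum K N) : ∃ w ≠ 0, N *ᵥ w = z • w := by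
  rw [← spectrum_toLin', ← Module.End.hasEigenvalue_iff_mem_spectrum] at hz
  obtain ⟨w, hw, hw0⟩ := hz.exists_hasEigenvector
  exact ⟨w, hw0, by simpa using hw⟩

/-- Only the diagonal entry of row `i` interacts with `z`; the off-diagonal entries are
nonnegative, so the triangle inequality bounds their contribution by `M i j * ‖w j‖`. -/
theorem IsMetzler.re_mul_norm_le_mulVec_norm [Fintype ι] [DecidableEq ι] {M : Matrix ι ι ℝ}
    (hM : M.IsMetzler) {z : ℂ} {w : ι → ℂ} (hw : M.map (Complex.ofReal ·) *ᵥ w = z • w) (i : ι) :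
    z.re * ‖w i‖ ≤ (M *ᵥ fun j => ‖w j‖) i := by
  have hrow : (z - M i i) * w i = ∑ j ∈ Finset.univ.erase i, (M i j : ℂ) * w j := by
    have := congrFun hw i
    rw [mulVec, dotProduct, ← Finset.add_sum_erase _ _ (Finset.mem_univ i)] at this
    simp only [map_apply, Pi.smul_apply, smul_eq_mul] at this
    linear_combination -this
  have hoff : ‖z - M i i‖ * ‖w i‖ ≤ ∑ j ∈ Finset.univ.erase i, M i j * ‖w j‖ := by
    rw [← norm_mul, hrow]
    refine (norm_sum_le _ _).trans_eq (Finset.sum_congr rfl fun j hj => ?_)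
    rw [norm_mul, Complex.norm_real, Real.norm_of_nonneg (hM i j (Finset.ne_of_mem_erase hj).symm)]
  have hre : z.re - M i i ≤ ‖z - M i i‖ := by
    simpa using Complex.re_le_norm (z - M i i)
  rw [mulVec, dotProduct, ← Finset.add_sum_erase _ _ (Finset.mem_univ i)]
  nlinarith [norm_nonneg (w i)]

theorem IsMetzler.re_neg_of_mem_spectrum [Fintype ι] [DecidableEq ι] {M : Matrix ι ι ℝ}
    (hM : M.IsMetzler) {v : ι → ℝ} (hv : ∀ i, 0 < v i) (hvM : ∀ j, (v ᵥ* M) j < 0) {z : ℂ}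
    (hz : z ∈ spectrum ℂ (M.map (Complex.ofReal ·))) : z.re < 0 := by
  obtain ⟨w, hw0, hw⟩ := exists_mulVec_eq_smul_of_mem_spectrum hz
  set a : ι → ℝ := fun j => ‖w j‖
  have ha : 0 ≤ a := fun j => norm_nonneg (w j)
  have ha0 : a ≠ 0 := fun h => hw0 (funext fun j => norm_eq_zero.mp (congrFun h j))
  have hsub : z.re * (v ⬝ᵥ a) ≤ (v ᵥ* M) ⬝ᵥ a := by
    rw [← dotProduct_mulVec, ← smul_eq_mul, ← dotProduct_smul]
    exact dotProduct_le_dotProduct_of_nonneg_left (hM.re_mul_norm_le_mulVec_norm hw)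
      fun j => (hv j).le
  have hneg : (v ᵥ* M) ⬝ᵥ a < 0 := by
    have := dotProduct_pos_of_pos_of_nonneg (v := -(v ᵥ* M)) (fun j => neg_pos.mpr (hvM j)) ha ha0
    rwa [neg_dotProduct, neg_pos] at this
  exact neg_of_mul_neg_left (hsub.trans_lt hneg) (dotProduct_pos_of_pos_of_nonneg hv ha ha0).le

end Matrix

theorem integral_le_sub_of_hasDerivWithinAt_le_neg {y y' g : ℝ → ℝ} {a b : ℝ} (hab : a ≤ b)
    (hy : ∀ t ∈ Icc a b, HasDerivWithinAt y (y' t) (Icc a b) t) (hg : ContinuousOn g (Icc a b))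
    (hle : ∀ t ∈ Ioo a b, y' t ≤ -g t) :
    ∫ t in a..b, g t ≤ y a - y b := by
  have hsub := intervalIntegral.sub_le_integral_of_hasDeriv_right_of_le hab
    (fun t ht => (hy t ht).continuousWithinAt)
    (fun t ht => ((hy t (Ioo_subset_Icc_self ht)).mono_of_mem_nhdsWithin
      (Icc_mem_nhdsGT_of_mem ⟨ht.1.le, ht.2⟩)))
    (hg.neg.integrableOn_compact isCompact_Icc) hle
  simp only [Pi.neg_apply, intervalIntegral.integral_neg] at hsub
  linarith

theorem integrableOn_Ioi_and_integral_le_of_intervalIntegral_le {g : ℝ → ℝ} {a C : ℝ}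
    (hg : ∀ b, IntegrableOn g (Ioc a b)) (hg_nonneg : ∀ t ∈ Ioi a, 0 ≤ g t)
    (hC : ∀ b, a ≤ b → ∫ t in a..b, g t ≤ C) :
    IntegrableOn g (Ioi a) ∧ ∫ t in Ioi a, g t ≤ C := by
  have hC' : ∀ᶠ b in Filter.atTop, ∫ t in a..b, g t ≤ C :=
    Filter.eventually_atTop.mpr ⟨a, hC⟩
  have hint : IntegrableOn g (Ioi a) := by
    refine integrableOn_Ioi_of_intervalIntegral_norm_bounded C a hg Filter.tendsto_id ?_
    filter_upwards [hC', Filter.eventually_ge_atTop a] with b hb hab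
    rwa [intervalIntegral.integral_of_le hab, setIntegral_congr_fun measurableSet_Ioc
      fun t ht => Real.norm_of_nonneg (hg_nonneg t ht.1), ← intervalIntegral.integral_of_le hab]
  exact ⟨hint, le_of_tendsto (intervalIntegral_tendsto_integral_Ioi a hint Filter.tendsto_id) hC'⟩

theorem integrableOn_Ici_and_integral_le_of_hasDerivWithinAt_le_neg {y y' g : ℝ → ℝ} {a : ℝ}
    (hy : ∀ t ∈ Ici a, HasDerivWithinAt y (y' t) (Ici a) t) (hy_nonneg : ∀ t ∈ Ici a, 0 ≤ y t)
    (hg : ContinuousOn g (Ici a)) (hg_nonneg : ∀ t ∈ Ici a, 0 ≤ g t)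
    (hle : ∀ t ∈ Ici a, y' t ≤ -g t) :
    IntegrableOn g (Ici a) ∧ ∫ t in Ici a, g t ≤ y a := by
  have hg_Icc : ∀ b, ContinuousOn g (Icc a b) := fun b => hg.mono Icc_subset_Ici_self
  obtain ⟨hint, hbound⟩ := integrableOn_Ioi_and_integral_le_of_intervalIntegral_le
    (fun b => ((hg_Icc b).integrableOn_compact isCompact_Icc).mono_set Ioc_subset_Icc_self)
    (fun t ht => hg_nonneg t (mem_Ici_of_Ioi ht))
    (fun b hab => (integral_le_sub_of_hasDerivWithinAt_le_neg hab
      (fun t ht => (hy t ht.1).mono Icc_subset_Ici_self) (hg_Icc b)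
      (fun t ht => hle t ht.1.le)).trans (sub_le_self _ (hy_nonneg b hab)))
  exact ⟨(integrableOn_Ici_iff_integrableOn_Ioi).mpr hint, by rwa [integral_Ici_eq_integral_Ioi]⟩

theorem integrableOn_Ici_and_integral_dotProduct_le_of_hasDerivWithinAt_le_mulVec
    {ι : Type*} [Fintype ι] {M : Matrix ι ι ℝ} {v c : ι → ℝ} (hv : 0 ≤ v) (hc : 0 ≤ c)
    (hvM : v ᵥ* M ≤ -c) {x x' : ℝ → ι → ℝ} {a : ℝ} (hx_nonneg : ∀ t ∈ Ici a, 0 ≤ x t)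
    (hderiv : ∀ t ∈ Ici a, HasDerivWithinAt x (x' t) (Ici a) t)
    (hineq : ∀ t ∈ Ici a, x' t ≤ M *ᵥ x t) :
    IntegrableOn (fun t => c ⬝ᵥ x t) (Ici a) ∧ ∫ t in Ici a, c ⬝ᵥ x t ≤ v ⬝ᵥ x a := by
  have hy : ∀ t ∈ Ici a, HasDerivWithinAt (fun s => v ⬝ᵥ x s) (v ⬝ᵥ x' t) (Ici a) t :=
    fun t ht => HasDerivWithinAt.fun_sum fun i _ =>
      ((hasDerivWithinAt_pi.mp (hderiv t ht)) i).const_mul (v i)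
  have hle : ∀ t ∈ Ici a, v ⬝ᵥ x' t ≤ -(c ⬝ᵥ x t) := fun t ht => calc
    v ⬝ᵥ x' t ≤ v ⬝ᵥ (M *ᵥ x t) := dotProduct_le_dotProduct_of_nonneg_left (hineq t ht) hv
    _ = (v ᵥ* M) ⬝ᵥ x t := dotProduct_mulVec _ _ _
    _ ≤ (-c) ⬝ᵥ x t := dotProduct_le_dotProduct_of_nonneg_right hvM (hx_nonneg t ht)
    _ = -(c ⬝ᵥ x t) := neg_dotProduct _ _
  exact integrableOn_Ici_and_integral_le_of_hasDerivWithinAt_le_neg hy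
    (fun t ht => dotProduct_nonneg_of_nonneg hv (hx_nonneg t ht))
    ((continuous_const.dotProduct continuous_id).comp_continuousOn
      fun t ht => (hderiv t ht).continuousWithinAt)
    (fun t ht => dotProduct_nonneg_of_nonneg hc (hx_nonneg t ht)) hle

theorem sir_accumulated_infection_bound_general
    (n : ℕ) (A : Matrix (Fin n) (Fin n) ℝ) (hA : ∀ i j, 0 ≤ A i j)
    (jd β δ : Fin n → ℝ)
    (hjd : ∀ i, jd i = 0 ∨ jd i = 1) (hβ : ∀ i, 0 < β i) (hδ : ∀ i, 0 < δ i)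
    (J B D : Matrix (Fin n) (Fin n) ℝ)
    (hJ : J = Matrix.diagonal jd) (hB : B = Matrix.diagonal β) (hD : D = Matrix.diagonal δ)
    (x x' : ℝ → Fin n → ℝ)
    (hx_nonneg : ∀ t ∈ Set.Ici (0 : ℝ), ∀ i, 0 ≤ x t i)
    (hderiv : ∀ t ∈ Set.Ici (0 : ℝ), HasDerivWithinAt x (x' t) (Set.Ici 0) t)
    (hineq : ∀ t ∈ Set.Ici (0 : ℝ), ∀ i, x' t i ≤ ((J * B * A - D) *ᵥ x t) i)
    (lam σ : ℝ)
    (v : Fin n → ℝ) (hv : ∀ i, 0 < v i)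
    (h1 : ∀ j, (v ᵥ* (J * B * A)) j + ((fun _ : Fin n => (1 : ℝ)) ᵥ* D) j < (v ᵥ* D) j)
    (h2 : v ⬝ᵥ x 0 < lam + σ) :
    (∀ z ∈ spectrum ℂ ((J * B * A - D).map (Complex.ofReal ·)), z.re < 0) ∧
    IntegrableOn (fun t => ∑ i, (D *ᵥ x t) i) (Set.Ici 0) ∧
    (∫ t in Set.Ici (0 : ℝ), ∑ i, (D *ᵥ x t) i) - σ ≤ lam := by
  have hJBA : ∀ i j, 0 ≤ (J * B * A) i j := fun i j => by
    have hjd_nonneg : 0 ≤ jd i := by rcases hjd i with h | h <;> simp [h]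
    rw [hJ, hB, Matrix.mul_assoc, diagonal_mul, diagonal_mul]
    exact mul_nonneg hjd_nonneg (mul_nonneg (hβ i).le (hA i j))
  have hM : (J * B * A - D).IsMetzler := hD ▸ (IsMetzler.of_nonneg hJBA).sub_diagonal δ
  have hD_row : (fun _ => 1) ᵥ* D = δ := funext fun j => by simp [hD, vecMul_diagonal]
  have hvM : ∀ j, (v ᵥ* (J * B * A - D)) j < -δ j := fun j => by
    rw [vecMul_sub, Pi.sub_apply, ← hD_row]
    linarith [h1 j]
  refine ⟨fun z hz =>
    hM.re_neg_of_mem_spectrum hv (fun j => (hvM j).trans (neg_lt_zero.mpr (hδ j))) hz, ?_⟩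
  have hrow_sum : ∀ t, ∑ i, (D *ᵥ x t) i = δ ⬝ᵥ x t := fun t => by
    simp [hD, mulVec_diagonal, dotProduct]
  obtain ⟨hint, hbound⟩ := integrableOn_Ici_and_integral_dotProduct_le_of_hasDerivWithinAt_le_mulVec
    (fun i => (hv i).le) (fun i => (hδ i).le) (fun j => (hvM j).le) hx_nonneg hderiv hineq
  simp only [hrow_sum]
  exact ⟨hint, by linarith⟩

/-- Deterministic core of Proposition 1: if `x(t) ≥ 0` satisfies
`(d/dt) x(t) ≤ (J B A - D) x(t)` and there is a positive vector `v` with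
`vᵀ J B A + 𝟙ₙᵀ D < vᵀ D` entrywise and `vᵀ x(0) < λ̄ + σ`, then `J B A - D` is
Hurwitz stable and `∫₀^∞ 𝟙ₙᵀ D x(t) dt - σ ≤ λ̄`. -/
theorem sir_accumulated_infection_bound
    (n : ℕ) (A : Matrix (Fin n) (Fin n) ℝ) (hA : ∀ i j, 0 ≤ A i j)
    (jd β δ : Fin n → ℝ)
    (hjd : ∀ i, jd i = 0 ∨ jd i = 1) (hβ : ∀ i, 0 < β i) (hδ : ∀ i, 0 < δ i)
    (J B D : Matrix (Fin n) (Fin n) ℝ)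
    (hJ : J = Matrix.diagonal jd) (hB : B = Matrix.diagonal β) (hD : D = Matrix.diagonal δ)
    (x x' : ℝ → Fin n → ℝ)
    (hx_nonneg : ∀ t ∈ Set.Ici (0 : ℝ), ∀ i, 0 ≤ x t i)
    (hderiv : ∀ t ∈ Set.Ici (0 : ℝ), HasDerivWithinAt x (x' t) (Set.Ici 0) t)
    (hineq : ∀ t ∈ Set.Ici (0 : ℝ), ∀ i, x' t i ≤ ((J * B * A - D) *ᵥ x t) i)
    (lam σ : ℝ) (hlam : 0 < lam) (hσ : 0 ≤ σ)
    (v : Fin n → ℝ) (hv : ∀ i, 0 < v i)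
    (h1 : ∀ j, (v ᵥ* (J * B * A)) j + ((fun _ : Fin n => (1 : ℝ)) ᵥ* D) j < (v ᵥ* D) j)
    (h2 : v ⬝ᵥ x 0 < lam + σ) :
    (∀ z ∈ spectrum ℂ ((J * B * A - D).map (Complex.ofReal ·)), z.re < 0) ∧
    IntegrableOn (fun t => ∑ i, (D *ᵥ x t) i) (Set.Ici 0) ∧
    (∫ t in Set.Ici (0 : ℝ), ∑ i, (D *ᵥ x t) i) - σ ≤ lam :=
  sir_accumulated_infection_bound_general n A hA jd β δ hjd hβ hδ J B D hJ hB hD x x' hx_nonneg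
    hderiv hineq lam σ v hv h1 h2
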